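/- Fix β ≥ 0 and consider the (SA) dynamics for n particles on S^{d-1} with d ≥ 2. If the initial configuration (x_1(0),...,x_n(0)) is α-clustered for some α ≥ 0, i.e., ⟨x_i(0), x_j(0)⟩ > α for all i, j ∈ [n], then there exists x* ∈ S^{d-1} and constants C, λ > 0 such that ‖x_i(t) - x*‖ ≤ C e^{-λt} for all i ∈ [n] and t ≥ 0. -/

import Mathlib

open Set
open scoped RealInnerProductSpace

/-- The self-attention vector field on the sphere. -/
noncomputable def SAfield {d n : ℕ} (β : ℝ) (x : Fin n → EuclideanSpace ℝ (Fin d))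
    (i : Fin n) : EuclideanSpace ℝ (Fin d) :=
  let v := (∑ k, Real.exp (β * ⟪x i, x k⟫))⁻¹ •
      ∑ j, Real.exp (β * ⟪x i, x j⟫) • x j
  v - ⟪x i, v⟫ • x i

/-!
Let `F = 1 - min_{i,j} ⟪x_i, x_j⟫`. Every attention weight is at least `c = e^{-2|β|}/n`, and
as long as all inner products are nonnegative (`F ≤ 1`), at a pair `(i, j)` realising the minimum
every term of the weighted sum `⟪ẋ_i, x_j⟫` is nonnegative while the `j`-th one is at least `cF`.
So the right Dini derivative of `F` is at most `-2cF`, and `F` decays like `e^{-2ct}` without ever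
reaching `1`. Each velocity is bounded by `√(2F) ≲ e^{-ct}`, hence integrable, so every particle
converges exponentially fast, and they share the limit because their mutual distances are
`≤ √(2F)` as well.
-/

open Filter Topology

section UnitVectors

variable {E : Type*} [NormedAddCommGroup E] [InnerProductSpace ℝ E]

lemma abs_real_inner_le_one {a b : E} (ha : ‖a‖ = 1) (hb : ‖b‖ = 1) : |⟪a, b⟫| ≤ 1 := by
  simpa [ha, hb] using abs_real_inner_le_norm a b

lemma norm_sub_inner_smul_le {e : E} (he : ‖e‖ = 1) (u : E) : ‖u - ⟪e, u⟫ • e‖ ≤ ‖u‖ := by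
  have h : ‖u - ⟪e, u⟫ • e‖ ^ 2 = ‖u‖ ^ 2 - ⟪e, u⟫ ^ 2 := by
    rw [norm_sub_sq_real, norm_smul, real_inner_smul_right, he, real_inner_comm, Real.norm_eq_abs]
    rw [mul_pow, sq_abs]
    ring
  exact (sq_le_sq₀ (norm_nonneg _) (norm_nonneg _)).1 (by nlinarith [sq_nonneg ⟪e, u⟫])

lemma norm_sub_le_sqrt_of_le_inner {a b : E} (ha : ‖a‖ = 1) (hb : ‖b‖ = 1) {F : ℝ}
    (h : 1 - F ≤ ⟪a, b⟫) : ‖a - b‖ ≤ √(2 * F) := by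
  refine Real.le_sqrt_of_sq_le ?_
  rw [norm_sub_sq_real, ha, hb]
  linarith

variable {ι : Type*} [Fintype ι] {y : ι → E} {w : ι → ℝ}

lemma norm_sum_smul_sub_inner_smul_le (hw0 : ∀ k, 0 ≤ w k) (hw1 : ∑ k, w k = 1) {i : ι}
    (hi : ‖y i‖ = 1) {r : ℝ} (hr : ∀ k, ‖y k - y i‖ ≤ r) :
    ‖∑ k, w k • y k - ⟪y i, ∑ k, w k • y k⟫ • y i‖ ≤ r := by
  set v := ∑ k, w k • y k
  have hv : ‖v - y i‖ ≤ r := by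
    simpa [dist_eq_norm] using (convex_closedBall (y i) r).sum_mem (fun k _ => hw0 k) hw1
      fun k _ => mem_closedBall_iff_norm.2 (hr k)
  have hproj : v - ⟪y i, v⟫ • y i = (v - y i) - ⟪y i, v - y i⟫ • y i := by
    rw [inner_sub_right, real_inner_self_eq_norm_sq, hi, sub_smul]
    module
  rw [hproj]
  exact (norm_sub_inner_smul_le hi _).trans hv

lemma mul_le_inner_sum_smul_sub_inner_smul (hy : ∀ k, ‖y k‖ = 1) (hw0 : ∀ k, 0 ≤ w k)
    {F : ℝ} (hF : F ≤ 1) (hlow : ∀ k l, 1 - F ≤ ⟪y k, y l⟫) {i j : ι}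
    (hij : ⟪y i, y j⟫ = 1 - F) :
    w j * F ≤ ⟪∑ k, w k • y k - ⟪y i, ∑ k, w k • y k⟫ • y i, y j⟫ := by
  have hexpand : ⟪∑ k, w k • y k - ⟪y i, ∑ k, w k • y k⟫ • y i, y j⟫
      = ∑ k, w k * (⟪y k, y j⟫ - ⟪y i, y k⟫ * (1 - F)) := by
    simp only [inner_sub_left, real_inner_smul_left, real_inner_smul_right, sum_inner, inner_sum,
      hij, Finset.sum_mul, ← Finset.sum_sub_distrib]
    exact Finset.sum_congr rfl fun k _ => by ring
  have hterm : ∀ k, 0 ≤ w k * (⟪y k, y j⟫ - ⟪y i, y k⟫ * (1 - F)) := fun k => by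
    have := (abs_le.1 (abs_real_inner_le_one (hy i) (hy k))).2
    exact mul_nonneg (hw0 k) (by nlinarith [hlow k j])
  have hF0 : 0 ≤ F := by linarith [(abs_le.1 (abs_real_inner_le_one (hy i) (hy j))).2]
  have hjj : ⟪y j, y j⟫ = 1 := by rw [real_inner_self_eq_norm_sq, hy j, one_pow]
  calc w j * F ≤ w j * (⟪y j, y j⟫ - ⟪y i, y j⟫ * (1 - F)) := by
        rw [hjj, hij]; nlinarith [hw0 j, mul_nonneg (hw0 j) (mul_nonneg hF0 (sub_nonneg.2 hF))]
    _ ≤ _ := hexpand ▸ Finset.single_le_sum (fun k _ => hterm k) (Finset.mem_univ j)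

end UnitVectors

section Attention

variable {E : Type*} [NormedAddCommGroup E] [InnerProductSpace ℝ E] {ι : Type*} [Fintype ι]

noncomputable def attnWeight (β : ℝ) (y : ι → E) (i k : ι) : ℝ :=
  Real.exp (β * ⟪y i, y k⟫) / ∑ l, Real.exp (β * ⟪y i, y l⟫)

variable {β : ℝ} {y : ι → E}

lemma attnWeight_nonneg (i k : ι) : 0 ≤ attnWeight β y i k := by
  unfold attnWeight; positivity

lemma sum_attnWeight (i : ι) : ∑ k, attnWeight β y i k = 1 := by
  have : Nonempty ι := ⟨i⟩
  simp only [attnWeight, ← Finset.sum_div]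
  exact div_self (Finset.sum_pos (fun k _ => Real.exp_pos _) Finset.univ_nonempty).ne'

lemma exp_mul_inner_mem_Icc {a b : E} (ha : ‖a‖ = 1) (hb : ‖b‖ = 1) :
    Real.exp (β * ⟪a, b⟫) ∈ Icc (Real.exp (-|β|)) (Real.exp |β|) := by
  have h : |β * ⟪a, b⟫| ≤ |β| := by
    rw [abs_mul]
    exact mul_le_of_le_one_right (abs_nonneg β) (abs_real_inner_le_one ha hb)
  exact ⟨Real.exp_le_exp.2 (by linarith [neg_abs_le (β * ⟪a, b⟫)]),
    Real.exp_le_exp.2 ((le_abs_self _).trans h)⟩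

lemma exp_neg_two_abs_div_card_le_attnWeight (hy : ∀ k, ‖y k‖ = 1) (i k : ι) :
    Real.exp (-(2 * |β|)) / Fintype.card ι ≤ attnWeight β y i k := by
  have hZ : ∑ l, Real.exp (β * ⟪y i, y l⟫) ≤ Fintype.card ι * Real.exp |β| := by
    simpa using Finset.sum_le_sum fun l (_ : l ∈ Finset.univ) =>
      (exp_mul_inner_mem_Icc (β := β) (hy i) (hy l)).2
  calc Real.exp (-(2 * |β|)) / Fintype.card ι
      = Real.exp (-|β|) / (Fintype.card ι * Real.exp |β|) := by
        rw [show -(2 * |β|) = -|β| - |β| by ring, Real.exp_sub, div_div, mul_comm]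
    _ ≤ attnWeight β y i k :=
        div_le_div₀ (Real.exp_pos _).le (exp_mul_inner_mem_Icc (hy i) (hy k)).1
          (Finset.sum_pos (fun l _ => Real.exp_pos _) ⟨i, Finset.mem_univ i⟩) hZ

end Attention

lemma eventually_lt_add_mul_sub_of_hasDerivAt {g : ℝ → ℝ} {g' t c r : ℝ} (hg : HasDerivAt g g' t)
    (hc : g t ≤ c) (hr : g t = c → g' < r) : ∀ᶠ z in 𝓝[>] t, g z < c + r * (z - t) := by
  rcases hc.lt_or_eq with hlt | heq
  · have hline : ContinuousAt (fun z => c + r * (z - t)) t := by fun_prop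
    exact (hg.continuousAt.eventually_lt hline (by simpa using hlt)).filter_mono nhdsWithin_le_nhds
  · have hslope := (hasDerivAt_iff_tendsto_slope.1 hg).eventually_lt_const (hr heq)
    filter_upwards [hslope.filter_mono (nhdsWithin_mono _ fun z hz => ne_of_gt hz),
      self_mem_nhdsWithin] with z hz hzt
    rw [slope_def_field, div_lt_iff₀ (sub_pos.2 hzt), heq] at hz
    linarith

lemma eventually_slope_sup'_lt {ι : Type*} {s : Finset ι} (hs : s.Nonempty) {u : ι → ℝ → ℝ}
    {u' : ι → ℝ} {t r : ℝ} (hu : ∀ i ∈ s, HasDerivAt (u i) (u' i) t)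
    (hr : ∀ i ∈ s, u i t = s.sup' hs (fun i => u i t) → u' i < r) :
    ∀ᶠ z in 𝓝[>] t, slope (fun z => s.sup' hs fun i => u i z) t z < r := by
  have hall := (eventually_all_finset s).2 fun i hi =>
    eventually_lt_add_mul_sub_of_hasDerivAt (hu i hi) (s.le_sup' (fun i => u i t) hi) (hr i hi)
  filter_upwards [hall, self_mem_nhdsWithin] with z hz hzt
  rw [slope_def_field, div_lt_iff₀ (sub_pos.2 hzt), sub_lt_iff_lt_add']
  exact (Finset.sup'_lt_iff hs).2 hz

section ExpDecay

variable {E : Type*} [NormedAddCommGroup E] [NormedSpace ℝ E] {g g' : ℝ → E} {M c : ℝ}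

lemma norm_sub_le_of_norm_deriv_le_exp (hc : 0 < c)
    (hg : ∀ t ∈ Ici (0:ℝ), HasDerivAt g (g' t) t)
    (hg' : ∀ t ∈ Ici (0:ℝ), ‖g' t‖ ≤ M * Real.exp (-c * t)) {s t : ℝ} (hs : 0 ≤ s)
    (hst : s ≤ t) :
    ‖g t - g s‖ ≤ M / c * Real.exp (-c * s) := by
  have hM : 0 ≤ M / c :=
    div_nonneg (by simpa using (norm_nonneg _).trans (hg' 0 self_mem_Ici)) hc.le
  have hB : ∀ r, HasDerivAt (fun r => M / c * (Real.exp (-c * s) - Real.exp (-c * r)))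
      (M * Real.exp (-c * r)) r := fun r =>
    ((((hasDerivAt_id' r).const_mul (-c)).exp.const_sub _).const_mul (M / c)).congr_deriv
      (by field_simp)
  calc ‖g t - g s‖ ≤ M / c * (Real.exp (-c * s) - Real.exp (-c * t)) :=
        image_norm_le_of_norm_deriv_right_le_deriv_boundary (f := fun r => g r - g s)
          (fun r hr => ((hg r (hs.trans hr.1)).sub_const (g s)).continuousAt.continuousWithinAt)
          (fun r hr => ((hg r (hs.trans hr.1)).sub_const (g s)).hasDerivWithinAt) (by simp) hB
          (fun r hr => hg' r (hs.trans hr.1)) ⟨hst, le_rfl⟩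
    _ ≤ M / c * Real.exp (-c * s) := by nlinarith [Real.exp_pos (-c * t)]

lemma exists_tendsto_of_norm_deriv_le_exp [CompleteSpace E] (hc : 0 < c)
    (hg : ∀ t ∈ Ici (0:ℝ), HasDerivAt g (g' t) t)
    (hg' : ∀ t ∈ Ici (0:ℝ), ‖g' t‖ ≤ M * Real.exp (-c * t)) :
    ∃ L, Tendsto g atTop (𝓝 L) ∧ ∀ t ∈ Ici (0:ℝ), ‖g t - L‖ ≤ M / c * Real.exp (-c * t) := by
  have hdecay : Tendsto (fun t => M / c * Real.exp (-c * t)) atTop (𝓝 0) := by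
    simpa using (Real.tendsto_exp_atBot.comp
      (tendsto_id.const_mul_atTop_of_neg (neg_neg_of_pos hc))).const_mul (M / c)
  have hcauchy : CauchySeq g := Metric.cauchySeq_iff'.2 fun ε hε => by
    obtain ⟨N, hN, hN0⟩ :=
      ((hdecay.eventually (gt_mem_nhds hε)).and (eventually_ge_atTop 0)).exists
    exact ⟨N, fun t ht => (dist_eq_norm _ _).trans_lt
      ((norm_sub_le_of_norm_deriv_le_exp hc hg hg' hN0 ht).trans_lt hN)⟩
  obtain ⟨L, hL⟩ := cauchySeq_tendsto_of_complete hcauchy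
  refine ⟨L, hL, fun t ht => le_of_tendsto (tendsto_const_nhds.sub hL).norm ?_⟩
  filter_upwards [eventually_ge_atTop t] with s hs
  rw [norm_sub_rev]
  exact norm_sub_le_of_norm_deriv_le_exp hc hg hg' ht hs

end ExpDecay

section Spread

variable {E : Type*} [NormedAddCommGroup E] [InnerProductSpace ℝ E] {ι : Type*} [Fintype ι]
  [Nonempty ι]

noncomputable def innerSpread (y : ι → E) : ℝ :=
  Finset.univ.sup' Finset.univ_nonempty fun p : ι × ι => 1 - ⟪y p.1, y p.2⟫

variable {y : ι → E}

lemma one_sub_inner_le_innerSpread (k l : ι) : 1 - ⟪y k, y l⟫ ≤ innerSpread y :=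
  Finset.le_sup' (fun p : ι × ι => 1 - ⟪y p.1, y p.2⟫) (Finset.mem_univ (k, l))

lemma innerSpread_nonneg (hy : ∀ k, ‖y k‖ = 1) : 0 ≤ innerSpread y := by
  obtain ⟨k⟩ := ‹Nonempty ι›
  have := one_sub_inner_le_innerSpread (y := y) k k
  rwa [real_inner_self_eq_norm_sq, hy k, one_pow, sub_self] at this

lemma innerSpread_lt_one (h : ∀ k l, 0 < ⟪y k, y l⟫) : innerSpread y < 1 :=
  (Finset.sup'_lt_iff _).2 fun p _ => by linarith [h p.1 p.2]

lemma norm_sub_le_sqrt_innerSpread (hy : ∀ k, ‖y k‖ = 1) (k l : ι) :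
    ‖y k - y l‖ ≤ √(2 * innerSpread y) :=
  norm_sub_le_sqrt_of_le_inner (hy k) (hy l)
    (by linarith [one_sub_inner_le_innerSpread (y := y) k l])

end Spread

lemma SAfield_eq {d n : ℕ} (β : ℝ) (y : Fin n → EuclideanSpace ℝ (Fin d)) (i : Fin n) :
    SAfield β y i
      = ∑ k, attnWeight β y i k • y k - ⟪y i, ∑ k, attnWeight β y i k • y k⟫ • y i := by
  simp only [SAfield, attnWeight, div_eq_inv_mul, mul_smul, ← Finset.smul_sum]

noncomputable def attnRate (β : ℝ) (n : ℕ) : ℝ := Real.exp (-(2 * |β|)) / n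

lemma attnRate_pos (β : ℝ) {n : ℕ} (hn : 0 < n) : 0 < attnRate β n :=
  div_pos (Real.exp_pos _) (Nat.cast_pos.2 hn)

section SAfield

variable {d n : ℕ} [Nonempty (Fin n)] {β : ℝ} {y : Fin n → EuclideanSpace ℝ (Fin d)}

lemma norm_SAfield_le (hy : ∀ k, ‖y k‖ = 1) (i : Fin n) :
    ‖SAfield β y i‖ ≤ √(2 * innerSpread y) := by
  rw [SAfield_eq]
  exact norm_sum_smul_sub_inner_smul_le (fun k => attnWeight_nonneg i k) (sum_attnWeight i) (hy i)
    fun k => norm_sub_le_sqrt_innerSpread hy k i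

lemma attnRate_mul_innerSpread_le_inner_SAfield (hy : ∀ k, ‖y k‖ = 1) (hF : innerSpread y ≤ 1)
    {i j : Fin n} (hij : ⟪y i, y j⟫ = 1 - innerSpread y) :
    attnRate β n * innerSpread y ≤ ⟪SAfield β y i, y j⟫ := by
  rw [SAfield_eq]
  refine le_trans ?_ (mul_le_inner_sum_smul_sub_inner_smul hy (fun k => attnWeight_nonneg i k) hF
    (fun k l => by linarith [one_sub_inner_le_innerSpread (y := y) k l]) hij)
  refine mul_le_mul_of_nonneg_right ?_ (innerSpread_nonneg hy)
  simpa [attnRate] using exp_neg_two_abs_div_card_le_attnWeight (β := β) hy i j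

lemma neg_inner_SAfield_add_inner_SAfield_le (hy : ∀ k, ‖y k‖ = 1) (i j : Fin n) :
    -(⟪y i, SAfield β y j⟫ + ⟪SAfield β y i, y j⟫) ≤ 2 * √(2 * innerSpread y) := by
  have hj := (abs_le.1 (abs_real_inner_le_norm (y i) (SAfield β y j))).1
  have hi := (abs_le.1 (abs_real_inner_le_norm (SAfield β y i) (y j))).1
  rw [hy i] at hj
  rw [hy j] at hi
  linarith [norm_SAfield_le (β := β) hy i, norm_SAfield_le (β := β) hy j]

lemma neg_inner_SAfield_add_inner_SAfield_le_of_eq (hy : ∀ k, ‖y k‖ = 1)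
    (hF : innerSpread y ≤ 1) {i j : Fin n} (hij : 1 - ⟪y i, y j⟫ = innerSpread y) :
    -(⟪y i, SAfield β y j⟫ + ⟪SAfield β y i, y j⟫) ≤ -(2 * attnRate β n) * innerSpread y := by
  have hji := attnRate_mul_innerSpread_le_inner_SAfield (β := β) hy hF
    (i := j) (j := i) (by rw [real_inner_comm]; linarith)
  have hij := attnRate_mul_innerSpread_le_inner_SAfield (β := β) hy hF (i := i) (j := j)
    (by linarith)
  rw [real_inner_comm] at hji
  linarith

end SAfield

section Trajectory

variable {d n : ℕ} {β : ℝ} {x : Fin n → ℝ → EuclideanSpace ℝ (Fin d)}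
  (hx : ∀ i t, ‖x i t‖ = 1)
  (hode : ∀ i, ∀ t ∈ Ici (0:ℝ), HasDerivAt (x i) (SAfield β (fun j => x j t) i) t)
include hode

lemma hasDerivAt_one_sub_inner (i j : Fin n) {t : ℝ} (ht : t ∈ Ici 0) :
    HasDerivAt (fun s => 1 - ⟪x i s, x j s⟫)
      (-(⟪x i t, SAfield β (fun k => x k t) j⟫ + ⟪SAfield β (fun k => x k t) i, x j t⟫)) t :=
  ((hode i t ht).inner ℝ (hode j t ht)).const_sub 1

variable [Nonempty (Fin n)]
include hx

lemma innerSpread_le_mul_exp_add {ε : ℝ} (hε : 0 < ε)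
    (hε1 : innerSpread (fun i => x i 0) + ε ≤ 1) {t : ℝ} (ht : 0 ≤ t) :
    innerSpread (fun i => x i t)
      ≤ innerSpread (fun i => x i 0) * Real.exp (-(2 * attnRate β n) * t) + ε := by
  set c := attnRate β n
  set f : ℝ → ℝ := fun s => innerSpread fun i => x i s
  have hc : 0 < c := attnRate_pos β (Fin.pos (Classical.arbitrary _))
  have hcont : ContinuousOn f (Icc 0 t) := fun s hs =>
    (ContinuousAt.finset_sup'_apply Finset.univ_nonempty fun p _ =>
      (hasDerivAt_one_sub_inner hode p.1 p.2 hs.1).continuousAt).continuousWithinAt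
  -- The barrier is lifted by `ε` so that the comparison is strict and `F ≤ 1` holds at every
  -- contact point, where the minimising-pair estimate applies; elsewhere the crude bound
  -- `2√(2F)` on the Dini derivative is enough.
  refine image_le_of_liminf_slope_right_lt_deriv_boundary
    (f' := fun s => if f s ≤ 1 then -(2 * c) * f s else 2 * √(2 * f s))
    (B := fun s => f 0 * Real.exp (-(2 * c) * s) + ε)
    (B' := fun s => -(2 * c) * (f 0 * Real.exp (-(2 * c) * s)))
    hcont ?_ (by simpa using hε.le) ?_ ?_ ⟨ht, le_rfl⟩
  · intro s hs r hr
    refine (eventually_slope_sup'_lt Finset.univ_nonempty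
      (fun p _ => hasDerivAt_one_sub_inner hode p.1 p.2 hs.1) fun p _ hp => ?_).frequently
    refine lt_of_le_of_lt ?_ hr
    split_ifs with hF
    · exact neg_inner_SAfield_add_inner_SAfield_le_of_eq (fun k => hx k s) hF hp
    · exact neg_inner_SAfield_add_inner_SAfield_le (fun k => hx k s) p.1 p.2
  · intro s
    exact ((((hasDerivAt_id' s).const_mul (-(2 * c))).exp.const_mul (f 0)).add_const ε
      ).congr_deriv (by ring)
  · intro s hs hfs
    have hexp : Real.exp (-(2 * c) * s) ≤ 1 := Real.exp_le_one_iff.2 (by nlinarith [hs.1])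
    have hf0 : 0 ≤ f 0 := innerSpread_nonneg fun k => hx k 0
    have hF : f s ≤ 1 := by rw [hfs]; nlinarith
    show (if f s ≤ 1 then _ else _) < _
    rw [if_pos hF, hfs]
    nlinarith

lemma innerSpread_le_mul_exp (h0 : innerSpread (fun i => x i 0) < 1) {t : ℝ} (ht : 0 ≤ t) :
    innerSpread (fun i => x i t)
      ≤ innerSpread (fun i => x i 0) * Real.exp (-(2 * attnRate β n) * t) :=
  le_of_forall_pos_le_add fun ε hε =>
    (innerSpread_le_mul_exp_add hx hode (lt_min hε (sub_pos.2 h0))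
      (by linarith [min_le_right ε (1 - innerSpread fun i => x i 0)]) ht).trans
      (by gcongr; exact min_le_left _ _)

lemma sqrt_two_innerSpread_le (h0 : innerSpread (fun i => x i 0) < 1) {t : ℝ} (ht : 0 ≤ t) :
    √(2 * innerSpread fun i => x i t)
      ≤ √(2 * innerSpread fun i => x i 0) * Real.exp (-attnRate β n * t) := by
  have hsq : Real.exp (-(2 * attnRate β n) * t) = Real.exp (-attnRate β n * t) ^ 2 := by
    rw [sq, ← Real.exp_add]; ring_nf
  calc √(2 * innerSpread fun i => x i t)
      ≤ √((2 * innerSpread fun i => x i 0) * Real.exp (-attnRate β n * t) ^ 2) := by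
        rw [mul_assoc, ← hsq]
        exact Real.sqrt_le_sqrt (by linarith [innerSpread_le_mul_exp hx hode h0 ht])
    _ = √(2 * innerSpread fun i => x i 0) * Real.exp (-attnRate β n * t) := by
        rw [Real.sqrt_mul (by linarith [innerSpread_nonneg fun k => hx k 0]),
          Real.sqrt_sq (Real.exp_pos _).le]

end Trajectory

theorem stmt_18_general {d n : ℕ} (hn : 0 < n) (β : ℝ)
    (α : ℝ) (hα : 0 ≤ α)
    (x : Fin n → ℝ → EuclideanSpace ℝ (Fin d))
    (hsphere : ∀ i t, x i t ∈ Metric.sphere (0 : EuclideanSpace ℝ (Fin d)) 1)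
    (hode : ∀ i, ∀ t ∈ Ici (0:ℝ),
      HasDerivAt (x i) (SAfield β (fun j => x j t) i) t)
    (hclustered : ∀ i j, α < ⟪x i 0, x j 0⟫) :
    ∃ xstar ∈ Metric.sphere (0 : EuclideanSpace ℝ (Fin d)) 1,
      ∃ C > 0, ∃ lam > 0, ∀ i, ∀ t ∈ Ici (0:ℝ),
        ‖x i t - xstar‖ ≤ C * Real.exp (-lam * t) := by
  let i₀ : Fin n := ⟨0, hn⟩
  have : Nonempty (Fin n) := ⟨i₀⟩
  have hx : ∀ i t, ‖x i t‖ = 1 := fun i t => mem_sphere_zero_iff_norm.1 (hsphere i t)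
  have h0 : innerSpread (fun i => x i 0) < 1 :=
    innerSpread_lt_one fun k l => hα.trans_lt (hclustered k l)
  set c := attnRate β n
  set K := √(2 * innerSpread fun i => x i 0)
  have hc : 0 < c := attnRate_pos β hn
  have hdiam : ∀ t ∈ Ici (0:ℝ), √(2 * innerSpread fun i => x i t) ≤ K * Real.exp (-c * t) :=
    fun t ht => sqrt_two_innerSpread_le hx hode h0 ht
  obtain ⟨xstar, hlim, hrate⟩ := exists_tendsto_of_norm_deriv_le_exp hc (hode i₀)
    fun t ht => (norm_SAfield_le (fun k => hx k t) i₀).trans (hdiam t ht)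
  refine ⟨xstar, Metric.isClosed_sphere.mem_of_tendsto hlim (.of_forall (hsphere i₀)),
    K / c + K + 1, by positivity, c, hc, fun i t ht => ?_⟩
  calc ‖x i t - xstar‖ ≤ ‖x i t - x i₀ t‖ + ‖x i₀ t - xstar‖ :=
        norm_sub_le_norm_sub_add_norm_sub _ _ _
    _ ≤ K * Real.exp (-c * t) + K / c * Real.exp (-c * t) :=
        add_le_add ((norm_sub_le_sqrt_innerSpread (fun k => hx k t) i i₀).trans (hdiam t ht))
          (hrate t ht)
    _ ≤ (K / c + K + 1) * Real.exp (-c * t) := by nlinarith [Real.exp_pos (-c * t)]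

/-- If the initial configuration of the (SA) dynamics is `α`-clustered for some
`α ≥ 0` (i.e. `⟨x_i(0), x_j(0)⟩ > α` for all `i,j`), then all particles converge
exponentially fast to a common limit point `x* ∈ S^{d-1}`. -/
theorem stmt_18 {d n : ℕ} (hd : 2 ≤ d) (hn : 0 < n) (β : ℝ) (hβ : 0 ≤ β)
    (α : ℝ) (hα : 0 ≤ α)
    (x : Fin n → ℝ → EuclideanSpace ℝ (Fin d))
    (hsphere : ∀ i t, x i t ∈ Metric.sphere (0 : EuclideanSpace ℝ (Fin d)) 1)
    (hode : ∀ i, ∀ t ∈ Ici (0:ℝ),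
      HasDerivAt (x i) (SAfield β (fun j => x j t) i) t)
    (hclustered : ∀ i j, α < ⟪x i 0, x j 0⟫) :
    ∃ xstar ∈ Metric.sphere (0 : EuclideanSpace ℝ (Fin d)) 1,
      ∃ C > 0, ∃ lam > 0, ∀ i, ∀ t ∈ Ici (0:ℝ),
        ‖x i t - xstar‖ ≤ C * Real.exp (-lam * t) :=
  stmt_18_general hn β α hα x hsphere hode hclustered
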